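/- arXiv:2306.15557 — 4 statements merged into one kernel-verified Lean document; each statement's English description precedes it below -/
import Mathlib

section
/- Let d(x, X, f) = Σ_{x'∈X} (x' − x)·α(‖x' − x‖₂)·𝟙(f(x')=1) where α: ℝ≥0 → ℝ≥0 satisfies α(z) ≤ C/z for all z > 0. Then for any point of interest x ∈ ℝ^m, any model f : ℝ^m → {−1,+1}, any finite dataset X ⊆ ℝ^m, and any point x' ∉ X, we have ‖d(x, X ∪ {x'}, f) − d(x, X, f)‖₂ ≤ C. That is, the global ℓ₂-sensitivity of the StEP direction with respect to adding a datapoint is at most C. -/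
open Finset

theorem norm_smul_norm_le_of_le_div {E : Type*} [SeminormedAddCommGroup E] [NormedSpace ℝ E]
    {α : ℝ → ℝ} {C : ℝ} (hC : 0 ≤ C) (hα_nonneg : ∀ z > 0, 0 ≤ α z)
    (hα : ∀ z > 0, α z ≤ C / z) (v : E) : ‖α ‖v‖ • v‖ ≤ C := by
  rcases (norm_nonneg v).eq_or_lt with hv | hv
  · simpa [norm_smul, ← hv] using hC
  calc ‖α ‖v‖ • v‖ = α ‖v‖ * ‖v‖ := by
        rw [norm_smul, Real.norm_of_nonneg (hα_nonneg _ hv)]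
    _ ≤ C / ‖v‖ * ‖v‖ := by gcongr; exact hα _ hv
    _ = C := div_mul_cancel₀ C hv.ne'

open scoped Classical in
/-- Sensitivity of the StEP direction: adding one datapoint changes the
direction by at most `C` in Euclidean norm, provided `α z ≤ C / z`. -/
theorem step_sensitivity (m : ℕ) (C : ℝ) (hC : 0 ≤ C)
    (α : ℝ → ℝ) (hα_nonneg : ∀ z > 0, 0 ≤ α z)
    (hα : ∀ z > 0, α z ≤ C / z)
    (f : EuclideanSpace ℝ (Fin m) → ℤ)
    (X : Finset (EuclideanSpace ℝ (Fin m)))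
    (x x' : EuclideanSpace ℝ (Fin m)) (hx' : x' ∉ X) :
    ‖(∑ z ∈ insert x' X, (if f z = 1 then α ‖z - x‖ • (z - x) else 0))
      - ∑ z ∈ X, (if f z = 1 then α ‖z - x‖ • (z - x) else 0)‖ ≤ C := by
  rw [sum_insert hx', add_sub_cancel_right]
  split_ifs
  · exact norm_smul_norm_le_of_le_div hC hα_nonneg hα (x' - x)
  · simpa using hC
end

section
/- Suppose d is a direction function satisfying: (RRF) for every orthogonal matrix A (det A ∈ {−1,+1}), A·d(x, X, f) = d(Ax, AX, f∘A⁻¹); and (PCM) for every point y ∉ X with f(y) = 1, for each coordinate i, if yᵢ > xᵢ then dᵢ(x, X ∪ {y}, f) ≥ dᵢ(x, X, f), and if yᵢ < xᵢ then dᵢ(x, X ∪ {y}, f) ≤ dᵢ(x, X, f). Then for every dataset X, point x, model f, and positively classified point y ≠ x with y ∉ X, there exists a ≥ 0 such that d(x, X ∪ {y}, f) − d(x, X, f) = a·(y − x). -/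
/-!
Write `v = y - x` and `D = d(x, X ∪ {y}, f) - d(x, X, f)`. Every unit vector `u` is the `i`-th
row of some orthogonal matrix (a Householder reflection sending `eᵢ` to `u`), so applying PCM in
the frame rotated by that matrix, which RRF allows, gives `⟪u, v⟫ > 0 → ⟪u, D⟫ ≥ 0` for all `u`.
A vector `D` with this property is a nonnegative multiple of `v`: otherwise its component `r`
orthogonal to `v` is nonzero and `u = v - t r` violates it for large `t`.
-/

open Finset Matrix RealInnerProductSpace

theorem exists_nonneg_smul_eq_of_inner_nonneg {E : Type*} [NormedAddCommGroup E]
    [InnerProductSpace ℝ E] {v w : E} (hv : v ≠ 0)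
    (h : ∀ u : E, 0 < ⟪u, v⟫ → 0 ≤ ⟪u, w⟫) : ∃ a : ℝ, 0 ≤ a ∧ w = a • v := by
  have hvv : 0 < ⟪v, v⟫ := real_inner_self_pos.2 hv
  set a := ⟪v, w⟫ / ⟪v, v⟫
  set r := w - a • v
  have hrv : ⟪r, v⟫ = 0 := by
    simp only [r, inner_sub_left, real_inner_smul_left, a, real_inner_comm w]
    field_simp
    ring
  have hrw : ⟪r, w⟫ = ⟪r, r⟫ := by
    rw [show w = r + a • v by simp [r], inner_add_right, real_inner_smul_right, hrv]
    simp [r]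
  refine ⟨a, div_nonneg (h v hvv) hvv.le, ?_⟩
  by_contra hw
  have hrr : 0 < ⟪r, r⟫ := real_inner_self_pos.2 (sub_ne_zero.2 hw)
  set t := (⟪v, w⟫ + 1) / ⟪r, r⟫
  have hu := h (v - t • r) (by rw [inner_sub_left, real_inner_smul_left, hrv]; linarith)
  rw [inner_sub_left, real_inner_smul_left, hrw, div_mul_cancel₀ _ hrr.ne'] at hu
  linarith

theorem exists_mem_orthogonalGroup_mulVec_apply_eq_inner {ι : Type*} [Fintype ι] [DecidableEq ι]
    {u : EuclideanSpace ℝ ι} (hu : ‖u‖ = 1) (i : ι) :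
    ∃ A ∈ orthogonalGroup ι ℝ, ∀ z : EuclideanSpace ℝ ι, (A *ᵥ z) i = ⟪u, z⟫ := by
  set e := EuclideanSpace.single i (1 : ℝ)
  set R := (ℝ ∙ (e - u))ᗮ.reflection
  have hR : R e = u := Submodule.reflection_sub (by simp [e, hu])
  set b := EuclideanSpace.basisFun ι ℝ
  refine ⟨LinearMap.toMatrix b.toBasis b.toBasis R.toLinearEquiv,
    R.toMatrix_mem_unitaryGroup b b, fun z => ?_⟩
  have hrepr : ⇑(b.toBasis.repr z) = z.ofLp := funext fun k => by simp [b]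
  -- a reflection is self-adjoint, so `(R z)ᵢ = ⟪R eᵢ, z⟫`
  rw [← hrepr, LinearMap.toMatrix_mulVec_repr, ← hR, R.inner_map_eq_flip,
    Submodule.reflection_symm, EuclideanSpace.inner_single_left]
  simp [b, R]

abbrev DirectionFunction (m : ℕ) : Type :=
  EuclideanSpace ℝ (Fin m) → Finset (EuclideanSpace ℝ (Fin m)) →
    (EuclideanSpace ℝ (Fin m) → ℤ) → EuclideanSpace ℝ (Fin m)

namespace DirectionFunction

variable {m : ℕ}

/-- The paper's RRF. -/
def OrthogonalEquivariant (d : DirectionFunction m) : Prop :=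
  ∀ A ∈ orthogonalGroup (Fin m) ℝ, ∀ (x : EuclideanSpace ℝ (Fin m))
    (X : Finset (EuclideanSpace ℝ (Fin m))) (f : EuclideanSpace ℝ (Fin m) → ℤ),
    (WithLp.toLp 2 (A *ᵥ d x X f) : EuclideanSpace ℝ (Fin m)) =
      d (WithLp.toLp 2 (A *ᵥ x))
        (X.image fun z : EuclideanSpace ℝ (Fin m) =>
          (WithLp.toLp 2 (A *ᵥ z) : EuclideanSpace ℝ (Fin m)))
        (fun z => f (WithLp.toLp 2 (A⁻¹ *ᵥ z)))

/-- The paper's PCM. -/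
def PositiveMonotone (d : DirectionFunction m) : Prop :=
  ∀ (x : EuclideanSpace ℝ (Fin m)) (X : Finset (EuclideanSpace ℝ (Fin m)))
    (f : EuclideanSpace ℝ (Fin m) → ℤ) (y : EuclideanSpace ℝ (Fin m)),
    y ∉ X → f y = 1 → ∀ i : Fin m,
    (y i > x i → d x (insert y X) f i ≥ d x X f i) ∧
    (y i < x i → d x (insert y X) f i ≤ d x X f i)

variable {d : DirectionFunction m} {x y : EuclideanSpace ℝ (Fin m)}
  {X : Finset (EuclideanSpace ℝ (Fin m))} {f : EuclideanSpace ℝ (Fin m) → ℤ}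

theorem mulVec_apply_le_of_mulVec_apply_lt (hR : d.OrthogonalEquivariant)
    (hP : d.PositiveMonotone) {A : Matrix (Fin m) (Fin m) ℝ} (hA : A ∈ orthogonalGroup (Fin m) ℝ)
    (hy : y ∉ X) (hfy : f y = 1) {i : Fin m} (h : (A *ᵥ x) i < (A *ᵥ y) i) :
    (A *ᵥ d x X f) i ≤ (A *ᵥ d x (insert y X) f) i := by
  have hinv : A⁻¹ * A = 1 :=
    nonsing_inv_mul A <| isUnit_det_of_left_inverse ((mem_orthogonalGroup_iff' _ _).1 hA)
  set φ : EuclideanSpace ℝ (Fin m) → EuclideanSpace ℝ (Fin m) := fun z => WithLp.toLp 2 (A *ᵥ z)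
  have hφ : Function.LeftInverse
      (fun w : EuclideanSpace ℝ (Fin m) => (WithLp.toLp 2 (A⁻¹ *ᵥ w) : EuclideanSpace ℝ (Fin m)))
      φ := fun z => by simp [φ, mulVec_mulVec, hinv]
  have hPφ := (hP (φ x) (X.image φ) (fun z => f (WithLp.toLp 2 (A⁻¹ *ᵥ z))) (φ y)
    (fun hmem => hy (hφ.injective.mem_finset_image.1 hmem))
    ((congrArg f (hφ y)).trans hfy) i).1 h
  rwa [← image_insert, ← hR A hA, ← hR A hA] at hPφ

theorem inner_sub_nonneg_of_inner_sub_pos (hR : d.OrthogonalEquivariant)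
    (hP : d.PositiveMonotone) (hy : y ∉ X) (hfy : f y = 1) {u : EuclideanSpace ℝ (Fin m)}
    (hu : 0 < ⟪u, y - x⟫) : 0 ≤ ⟪u, d x (insert y X) f - d x X f⟫ := by
  have hu0 : u ≠ 0 := by
    rintro rfl
    simp at hu
  obtain ⟨i, -⟩ : ∃ i, u i ≠ 0 := by
    by_contra! h
    exact hu0 (PiLp.ext h)
  have hunit : ‖‖u‖⁻¹ • u‖ = 1 := by
    rw [norm_smul, norm_inv, norm_norm, inv_mul_cancel₀ (norm_ne_zero_iff.2 hu0)]
  obtain ⟨A, hA, hAu⟩ := exists_mem_orthogonalGroup_mulVec_apply_eq_inner hunit i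
  have hc : 0 < ‖u‖⁻¹ := inv_pos.2 (norm_pos_iff.2 hu0)
  have key := mulVec_apply_le_of_mulVec_apply_lt hR hP hA hy hfy (x := x) (i := i) (by
    rw [hAu, hAu, ← sub_pos, ← inner_sub_right, real_inner_smul_left]
    exact mul_pos hc hu)
  rw [hAu, hAu, ← sub_nonneg, ← inner_sub_right, real_inner_smul_left] at key
  exact nonneg_of_mul_nonneg_right key hc

end DirectionFunction

/-- Lemma 3.1: RRF + PCM imply that adding a positively classified point moves
the direction along the ray towards that point. -/
theorem step_ray_lemma (m : ℕ)
    (d : EuclideanSpace ℝ (Fin m) → Finset (EuclideanSpace ℝ (Fin m)) →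
          (EuclideanSpace ℝ (Fin m) → ℤ) → EuclideanSpace ℝ (Fin m))
    (hRRF : ∀ (A : Matrix (Fin m) (Fin m) ℝ), A ∈ Matrix.orthogonalGroup (Fin m) ℝ →
      ∀ (x : EuclideanSpace ℝ (Fin m)) (X : Finset (EuclideanSpace ℝ (Fin m)))
        (f : EuclideanSpace ℝ (Fin m) → ℤ),
        (WithLp.toLp 2 (A.mulVec (d x X f)) : EuclideanSpace ℝ (Fin m)) =
          d (WithLp.toLp 2 (A.mulVec x)) (X.image (fun (z : EuclideanSpace ℝ (Fin m)) => (WithLp.toLp 2 (A.mulVec z) : EuclideanSpace ℝ (Fin m))))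
            (fun z => f (WithLp.toLp 2 ((A⁻¹).mulVec z))))
    (hPCM : ∀ (x : EuclideanSpace ℝ (Fin m)) (X : Finset (EuclideanSpace ℝ (Fin m)))
        (f : EuclideanSpace ℝ (Fin m) → ℤ) (y : EuclideanSpace ℝ (Fin m)),
        y ∉ X → f y = 1 → ∀ i : Fin m,
          (y i > x i → d x (insert y X) f i ≥ d x X f i) ∧
          (y i < x i → d x (insert y X) f i ≤ d x X f i)) :
    ∀ (x : EuclideanSpace ℝ (Fin m)) (X : Finset (EuclideanSpace ℝ (Fin m)))
      (f : EuclideanSpace ℝ (Fin m) → ℤ) (y : EuclideanSpace ℝ (Fin m)),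
      y ∉ X → y ≠ x → f y = 1 →
      ∃ a : ℝ, 0 ≤ a ∧ d x (insert y X) f - d x X f = a • (y - x) := by
  intro x X f y hyX hyx hfy
  exact exists_nonneg_smul_eq_of_inner_nonneg (sub_ne_zero.2 hyx) fun _ hu =>
    DirectionFunction.inner_sub_nonneg_of_inner_sub_pos hRRF hPCM hyX hfy hu
end

section
/- Single-point case of the StEP uniqueness theorem: suppose a direction function d satisfies Shift Invariance, Rotation/Reflection Faithfulness, Data Manifold Symmetry, and the ray property of Lemma 3.1 (for any positively classified y ∉ X with y ≠ x, d(x, X ∪ {y}, f) − d(x, X, f) = a(y − x) for some a ≥ 0), and d(x, ∅, f) = 0. Then there exists a nonnegative function α : ℝ>0 → ℝ≥0 such that for every x, every y ≠ x with f(y) = 1, d(x, {y}, f) = α(‖y − x‖₂)·(y − x). -/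
/-!
Translating `x` to the origin and replacing `f` by the constant classifier `1` (which agrees with
`f` on `{y}`) gives `d x {y} f = D (y - x)` with `D v = d 0 {v} 1`. By the ray property `D v` is a
nonnegative multiple of `v`, so `D v = (‖D v‖ / ‖v‖) • v`. The reflection in the hyperplane
orthogonal to `v - w` is an orthogonal map sending `v` to `w` whenever `‖v‖ = ‖w‖`, so
`‖D v‖` depends only on `‖v‖`.
-/

open Matrix

theorem exists_forall_ne_zero_eq_smul_of_norm_eq {E : Type*} [NormedAddCommGroup E]
    [NormedSpace ℝ E] {D : E → E} (hray : ∀ v ≠ 0, ∃ a : ℝ, 0 ≤ a ∧ D v = a • v)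
    (hnorm : ∀ v w, ‖v‖ = ‖w‖ → ‖D v‖ = ‖D w‖) :
    ∃ α : ℝ → ℝ, (∀ r > 0, 0 ≤ α r) ∧ ∀ v ≠ 0, D v = α ‖v‖ • v := by
  classical
  refine ⟨fun r => if h : ∃ v : E, ‖v‖ = r then ‖D h.choose‖ / r else 0,
    fun r hr => by dsimp only; split_ifs <;> positivity, fun v hv => ?_⟩
  have hv' : ∃ w : E, ‖w‖ = ‖v‖ := ⟨v, rfl⟩
  obtain ⟨a, ha, hDv⟩ := hray v hv
  have hcoeff : ‖D v‖ / ‖v‖ = a := by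
    rw [hDv, norm_smul, Real.norm_of_nonneg ha, mul_div_cancel_right₀ _ (norm_ne_zero_iff.2 hv)]
  simp only [dif_pos hv']
  rw [hnorm _ _ hv'.choose_spec, hcoeff, hDv]

theorem LinearIsometryEquiv.exists_mem_orthogonalGroup_toLp_mulVec_eq {ι : Type*} [Fintype ι]
    [DecidableEq ι] (e : EuclideanSpace ℝ ι ≃ₗᵢ[ℝ] EuclideanSpace ℝ ι) :
    ∃ A ∈ orthogonalGroup ι ℝ, ∀ v : EuclideanSpace ℝ ι, WithLp.toLp 2 (A *ᵥ v) = e v := by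
  refine ⟨_, e.toMatrix_mem_unitaryGroup (EuclideanSpace.basisFun _ ℝ)
    (EuclideanSpace.basisFun _ ℝ), fun v => ?_⟩
  change toLpLin 2 2 _ v = _
  simp [toLpLin_eq_toLin, EuclideanSpace.basisFun_toBasis]

theorem norm_apply_eq_of_norm_eq {E : Type*} [NormedAddCommGroup E] [InnerProductSpace ℝ E]
    {D : E → E} (hD : ∀ (e : E ≃ₗᵢ[ℝ] E) v, e (D v) = D (e v)) {v w : E} (h : ‖v‖ = ‖w‖) :
    ‖D v‖ = ‖D w‖ := by
  let e := Submodule.reflection (ℝ ∙ (v - w))ᗮ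
  rw [← Submodule.reflection_sub h, ← hD e, e.norm_map]

section DirectionFunction

variable {V : Type*} {d : V → Finset V → (V → ℤ) → V}

theorem dir_singleton_eq_dir_origin [AddCommGroup V] [DecidableEq V]
    (hSI : ∀ x X f b, d x X f = d (x + b) (X.image (· + b)) (fun z => f (z - b)))
    (hDMS : ∀ x X (f g : V → ℤ), (∀ z ∈ X, f z = g z) → d x X f = d x X g)
    {x y : V} {f : V → ℤ} (hy : f y = 1) : d x {y} f = d 0 {y - x} (fun _ => 1) := by
  rw [hSI x {y} f (-x), add_neg_cancel, Finset.image_singleton, ← sub_eq_add_neg]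
  exact hDMS _ _ _ _ (by simp [hy])

theorem exists_nonneg_dir_origin_eq_smul [AddCommGroup V] [Module ℝ V] [DecidableEq V]
    (hRay : ∀ x X f y, y ∉ X → y ≠ x → f y = 1 →
      ∃ a : ℝ, 0 ≤ a ∧ d x (insert y X) f - d x X f = a • (y - x))
    (hEmpty : ∀ x f, d x ∅ f = 0) {v : V} (hv : v ≠ 0) :
    ∃ a : ℝ, 0 ≤ a ∧ d 0 {v} (fun _ => 1) = a • v := by
  simpa [hEmpty] using hRay 0 ∅ (fun _ => 1) v (Finset.notMem_empty v) hv rfl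

end DirectionFunction

theorem linearIsometryEquiv_apply_dir_origin {ι : Type*} [Fintype ι] [DecidableEq ι]
    {d : EuclideanSpace ℝ ι → Finset (EuclideanSpace ℝ ι) → (EuclideanSpace ℝ ι → ℤ) →
      EuclideanSpace ℝ ι}
    (hRRF : ∀ A ∈ orthogonalGroup ι ℝ, ∀ x X f,
      WithLp.toLp 2 (A *ᵥ d x X f) = d (WithLp.toLp 2 (A *ᵥ x))
        (X.image fun (z : EuclideanSpace ℝ ι) => WithLp.toLp 2 (A *ᵥ z))
        (fun z => f (WithLp.toLp 2 (A⁻¹ *ᵥ z))))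
    (e : EuclideanSpace ℝ ι ≃ₗᵢ[ℝ] EuclideanSpace ℝ ι) (v : EuclideanSpace ℝ ι) :
    e (d 0 {v} fun _ => 1) = d 0 {e v} fun _ => 1 := by
  obtain ⟨A, hA, hAe⟩ := e.exists_mem_orthogonalGroup_toLp_mulVec_eq
  simpa [hAe] using hRRF A hA 0 {v} fun _ => 1

open scoped Classical in
theorem step_singleton_general (m : ℕ)
    (d : EuclideanSpace ℝ (Fin m) → Finset (EuclideanSpace ℝ (Fin m)) →
          (EuclideanSpace ℝ (Fin m) → ℤ) → EuclideanSpace ℝ (Fin m))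
    (hSI : ∀ (x : EuclideanSpace ℝ (Fin m)) (X : Finset (EuclideanSpace ℝ (Fin m)))
      (f : EuclideanSpace ℝ (Fin m) → ℤ) (b : EuclideanSpace ℝ (Fin m)),
      d x X f = d (x + b) (X.image (fun z => z + b)) (fun z => f (z - b)))
    (hRRF : ∀ (A : Matrix (Fin m) (Fin m) ℝ), A ∈ Matrix.orthogonalGroup (Fin m) ℝ →
      ∀ (x : EuclideanSpace ℝ (Fin m)) (X : Finset (EuclideanSpace ℝ (Fin m)))
        (f : EuclideanSpace ℝ (Fin m) → ℤ),
        (WithLp.toLp 2 (A.mulVec (d x X f)) : EuclideanSpace ℝ (Fin m)) =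
          d (WithLp.toLp 2 (A.mulVec x)) (X.image (fun (z : EuclideanSpace ℝ (Fin m)) => (WithLp.toLp 2 (A.mulVec z) : EuclideanSpace ℝ (Fin m))))
            (fun z => f (WithLp.toLp 2 ((A⁻¹).mulVec z))))
    (hDMS : ∀ (x : EuclideanSpace ℝ (Fin m)) (X : Finset (EuclideanSpace ℝ (Fin m)))
      (f g : EuclideanSpace ℝ (Fin m) → ℤ),
      (∀ z ∈ X, f z = g z) → d x X f = d x X g)
    (hRay : ∀ (x : EuclideanSpace ℝ (Fin m)) (X : Finset (EuclideanSpace ℝ (Fin m)))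
      (f : EuclideanSpace ℝ (Fin m) → ℤ) (y : EuclideanSpace ℝ (Fin m)),
      y ∉ X → y ≠ x → f y = 1 →
      ∃ a : ℝ, 0 ≤ a ∧ d x (insert y X) f - d x X f = a • (y - x))
    (hEmpty : ∀ (x : EuclideanSpace ℝ (Fin m)) (f : EuclideanSpace ℝ (Fin m) → ℤ),
      d x ∅ f = 0) :
    ∃ α : ℝ → ℝ, (∀ z > (0 : ℝ), 0 ≤ α z) ∧
      ∀ (x y : EuclideanSpace ℝ (Fin m)) (f : EuclideanSpace ℝ (Fin m) → ℤ),
        y ≠ x → f y = 1 → d x {y} f = α ‖y - x‖ • (y - x) := by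
  obtain ⟨α, hα, hαD⟩ := exists_forall_ne_zero_eq_smul_of_norm_eq
    (fun _ => exists_nonneg_dir_origin_eq_smul hRay hEmpty)
    (fun _ _ => norm_apply_eq_of_norm_eq (linearIsometryEquiv_apply_dir_origin hRRF))
  refine ⟨α, hα, fun x y f hyx hy => ?_⟩
  rw [dir_singleton_eq_dir_origin hSI hDMS hy]
  exact hαD _ (sub_ne_zero_of_ne hyx)

open scoped Classical in
/-- Single-point case of the StEP uniqueness theorem: the direction toward a
single positively classified point is a nonnegative multiple of `y - x`,
with coefficient depending only on the distance `‖y - x‖`. -/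
theorem step_singleton (m : ℕ) (hm : 2 ≤ m)
    (d : EuclideanSpace ℝ (Fin m) → Finset (EuclideanSpace ℝ (Fin m)) →
          (EuclideanSpace ℝ (Fin m) → ℤ) → EuclideanSpace ℝ (Fin m))
    (hSI : ∀ (x : EuclideanSpace ℝ (Fin m)) (X : Finset (EuclideanSpace ℝ (Fin m)))
      (f : EuclideanSpace ℝ (Fin m) → ℤ) (b : EuclideanSpace ℝ (Fin m)),
      d x X f = d (x + b) (X.image (fun z => z + b)) (fun z => f (z - b)))
    (hRRF : ∀ (A : Matrix (Fin m) (Fin m) ℝ), A ∈ Matrix.orthogonalGroup (Fin m) ℝ →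
      ∀ (x : EuclideanSpace ℝ (Fin m)) (X : Finset (EuclideanSpace ℝ (Fin m)))
        (f : EuclideanSpace ℝ (Fin m) → ℤ),
        (WithLp.toLp 2 (A.mulVec (d x X f)) : EuclideanSpace ℝ (Fin m)) =
          d (WithLp.toLp 2 (A.mulVec x)) (X.image (fun (z : EuclideanSpace ℝ (Fin m)) => (WithLp.toLp 2 (A.mulVec z) : EuclideanSpace ℝ (Fin m))))
            (fun z => f (WithLp.toLp 2 ((A⁻¹).mulVec z))))
    (hDMS : ∀ (x : EuclideanSpace ℝ (Fin m)) (X : Finset (EuclideanSpace ℝ (Fin m)))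
      (f g : EuclideanSpace ℝ (Fin m) → ℤ),
      (∀ z ∈ X, f z = g z) → d x X f = d x X g)
    (hRay : ∀ (x : EuclideanSpace ℝ (Fin m)) (X : Finset (EuclideanSpace ℝ (Fin m)))
      (f : EuclideanSpace ℝ (Fin m) → ℤ) (y : EuclideanSpace ℝ (Fin m)),
      y ∉ X → y ≠ x → f y = 1 →
      ∃ a : ℝ, 0 ≤ a ∧ d x (insert y X) f - d x X f = a • (y - x))
    (hEmpty : ∀ (x : EuclideanSpace ℝ (Fin m)) (f : EuclideanSpace ℝ (Fin m) → ℤ),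
      d x ∅ f = 0) :
    ∃ α : ℝ → ℝ, (∀ z > (0 : ℝ), 0 ≤ α z) ∧
      ∀ (x y : EuclideanSpace ℝ (Fin m)) (f : EuclideanSpace ℝ (Fin m) → ℤ),
        y ≠ x → f y = 1 → d x {y} f = α ‖y - x‖ • (y - x) :=
  step_singleton_general m d hSI hRRF hDMS hRay hEmpty
end

section
/- Inductive step of the StEP uniqueness proof: let d be a direction function, x ∈ ℝ^m, f a classifier, and Y a finite dataset containing two distinct positively classified points y, z ≠ x such that y − x and z − x are linearly independent. Suppose (i) d(x, Y, f) ∈ {d(x, Y∖{y}, f) + a(y−x) : a ≥ 0} and d(x, Y, f) ∈ {d(x, Y∖{z}, f) + a(z−x) : a ≥ 0}, and (ii) d(x, Y∖{y}, f) = d(x, Y∖{y,z}, f) + α(‖z−x‖)(z−x) and d(x, Y∖{z}, f) = d(x, Y∖{y,z}, f) + α(‖y−x‖)(y−x) for some function α ≥ 0. Then d(x, Y, f) = d(x, Y∖{y,z}, f) + α(‖y−x‖)(y−x) + α(‖z−x‖)(z−x). -/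
open Finset

theorem LinearIndependent.eq_of_add_smul_eq_add_smul {R M : Type*} [Semiring R]
    [AddCancelCommMonoid M] [Module R M] {u v w p : M} {a b s t : R}
    (huv : LinearIndependent R ![u, v])
    (hu : p = w + t • v + a • u) (hv : p = w + s • u + b • v) :
    p = w + s • u + t • v := by
  have hcoeff : a • u + t • v = s • u + b • v := by
    apply add_left_cancel (a := w)
    rw [add_comm (a • u), ← add_assoc, ← add_assoc, ← hu, hv]
  obtain ⟨rfl, rfl⟩ := huv.eq_of_pair hcoeff
  rw [hv]

open scoped Classical in
theorem step_inductive_step_general (m : ℕ)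
    (d : EuclideanSpace ℝ (Fin m) → Finset (EuclideanSpace ℝ (Fin m)) →
          (EuclideanSpace ℝ (Fin m) → ℤ) → EuclideanSpace ℝ (Fin m))
    (α : ℝ → ℝ)
    (x : EuclideanSpace ℝ (Fin m)) (f : EuclideanSpace ℝ (Fin m) → ℤ)
    (Y : Finset (EuclideanSpace ℝ (Fin m))) (y z : EuclideanSpace ℝ (Fin m))
    (hindep : LinearIndependent ℝ ![y - x, z - x])
    (hray_y : ∃ a : ℝ, 0 ≤ a ∧ d x Y f = d x (Y.erase y) f + a • (y - x))
    (hray_z : ∃ b : ℝ, 0 ≤ b ∧ d x Y f = d x (Y.erase z) f + b • (z - x))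
    (hih_y : d x (Y.erase y) f =
      d x ((Y.erase y).erase z) f + α ‖z - x‖ • (z - x))
    (hih_z : d x (Y.erase z) f =
      d x ((Y.erase z).erase y) f + α ‖y - x‖ • (y - x)) :
    d x Y f = d x ((Y.erase y).erase z) f +
      α ‖y - x‖ • (y - x) + α ‖z - x‖ • (z - x) := by
  obtain ⟨a, -, ha⟩ := hray_y
  obtain ⟨b, -, hb⟩ := hray_z
  rw [erase_right_comm] at hih_z
  exact hindep.eq_of_add_smul_eq_add_smul (hih_y ▸ ha) (hih_z ▸ hb)

open scoped Classical in
/-- Inductive step of the StEP uniqueness proof. -/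
theorem step_inductive_step (m : ℕ)
    (d : EuclideanSpace ℝ (Fin m) → Finset (EuclideanSpace ℝ (Fin m)) →
          (EuclideanSpace ℝ (Fin m) → ℤ) → EuclideanSpace ℝ (Fin m))
    (α : ℝ → ℝ) (hα : ∀ t, 0 ≤ α t)
    (x : EuclideanSpace ℝ (Fin m)) (f : EuclideanSpace ℝ (Fin m) → ℤ)
    (Y : Finset (EuclideanSpace ℝ (Fin m))) (y z : EuclideanSpace ℝ (Fin m))
    (hyY : y ∈ Y) (hzY : z ∈ Y) (hyz : y ≠ z)
    (hfy : f y = 1) (hfz : f z = 1)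
    (hindep : LinearIndependent ℝ ![y - x, z - x])
    (hray_y : ∃ a : ℝ, 0 ≤ a ∧ d x Y f = d x (Y.erase y) f + a • (y - x))
    (hray_z : ∃ b : ℝ, 0 ≤ b ∧ d x Y f = d x (Y.erase z) f + b • (z - x))
    (hih_y : d x (Y.erase y) f =
      d x ((Y.erase y).erase z) f + α ‖z - x‖ • (z - x))
    (hih_z : d x (Y.erase z) f =
      d x ((Y.erase z).erase y) f + α ‖y - x‖ • (y - x)) :
    d x Y f = d x ((Y.erase y).erase z) f +
      α ‖y - x‖ • (y - x) + α ‖z - x‖ • (z - x) :=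
  step_inductive_step_general m d α x f Y y z hindep hray_y hray_z hih_y hih_z
end
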